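/- Let A = S¹ × {0} = {(cosθ, sinθ, 0) : θ ∈ ℝ} ⊂ ℍ¹ be the unit circle in the plane {x₃ = 0}, and let ℋ²_H be the 2-dimensional Hausdorff measure built from the Korányi metric d_H. Then the restriction of ℋ²_H to A is uniformly distributed on (ℍ¹, d_H): ℋ²_H(B(x,r) ∩ A) = ℋ²_H(B(y,r) ∩ A) for all x, y ∈ A and all r > 0. -/
import Mathlib


open MeasureTheory Set ENNReal Real

noncomputable section

/-- The first Heisenberg group `ℍ¹`, identified with `ℝ³`. -/
abbrev H1 := ℝ × ℝ × ℝ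

/-- The group law of `ℍ¹`:
`x·y = (x₁+y₁, x₂+y₂, x₃+y₃ - 2(x₁y₂ - x₂y₁))`. -/
def hmul1 (x y : H1) : H1 :=
  (x.1 + y.1, x.2.1 + y.2.1, x.2.2 + y.2.2 - 2 * (x.1 * y.2.1 - x.2.1 * y.1))

/-- The group inverse of `ℍ¹`, `x⁻¹ = -x`. -/
def hinv1 (x : H1) : H1 := (-x.1, -x.2.1, -x.2.2)

/-- The Korányi norm `‖x‖_H = ((x₁²+x₂²)² + x₃²)^{1/4}`. -/
def KNorm1 (x : H1) : ℝ := ((x.1 ^ 2 + x.2.1 ^ 2) ^ 2 + x.2.2 ^ 2) ^ ((1 : ℝ) / 4)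

/-- The Korányi metric `d_H(x,y) = ‖x⁻¹·y‖_H` on `ℍ¹`. -/
def dH1 (x y : H1) : ℝ := KNorm1 (hmul1 (hinv1 x) y)

/-- The closed `d_H`-ball of center `x` and radius `r`. -/
def ball1 (x : H1) (r : ℝ) : Set H1 := {y | dH1 x y ≤ r}

/-- `d_H`-diameter of a set, as an extended real. -/
def ediam1 (E : Set H1) : ℝ≥0∞ := ⨆ x ∈ E, ⨆ y ∈ E, ENNReal.ofReal (dH1 x y)

/-- The `s`-dimensional Hausdorff measure built from the Korányi metric `d_H` on `ℍ¹`. -/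
def haus1 (s : ℝ) (E : Set H1) : ℝ≥0∞ :=
  ⨆ (δ : ℝ) (_ : 0 < δ), ⨅ (t : ℕ → Set H1) (_ : E ⊆ ⋃ i, t i)
    (_ : ∀ i, ediam1 (t i) ≤ ENNReal.ofReal δ), ∑' i, ediam1 (t i) ^ s

/-- Rotation about the `x₃`-axis by angle `θ`. -/
def rot (θ : ℝ) (p : H1) : H1 :=
  (Real.cos θ * p.1 - Real.sin θ * p.2.1, Real.sin θ * p.1 + Real.cos θ * p.2.1, p.2.2)

lemma rot_rot (θ φ : ℝ) (p : H1) : rot θ (rot φ p) = rot (θ + φ) p := by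
  simp only [rot, Prod.mk.injEq, Real.cos_add, Real.sin_add]
  exact ⟨by ring, by ring, trivial⟩

lemma rot_zero (p : H1) : rot 0 p = p := by
  simp [rot]

lemma rot_neg_rot (θ : ℝ) (p : H1) : rot (-θ) (rot θ p) = p := by
  rw [rot_rot, neg_add_cancel, rot_zero]

lemma rot_comp (θ : ℝ) : rot (-θ) ∘ rot θ = id := by
  funext p; exact rot_neg_rot θ p

lemma rot_image_image (θ : ℝ) (E : Set H1) : rot (-θ) '' (rot θ '' E) = E := by
  rw [← Set.image_comp, rot_comp, Set.image_id]

lemma rot_injective (θ : ℝ) : Function.Injective (rot θ) := by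
  intro p q h
  have h2 := congrArg (rot (-θ)) h
  rwa [rot_neg_rot, rot_neg_rot] at h2

/-- Rotations are isometries of the Korányi metric. -/
lemma rot_dH (θ : ℝ) (x y : H1) : dH1 (rot θ x) (rot θ y) = dH1 x y := by
  obtain ⟨x1, x2, x3⟩ := x
  obtain ⟨y1, y2, y3⟩ := y
  simp only [dH1, KNorm1, rot, hmul1, hinv1]
  congr 1
  linear_combination ((Real.sin θ^2 + Real.cos θ^2 + 1) * ((y1-x1)^2+(y2-x2)^2)^2
    + 4*(x1*y2-x2*y1)*(y3-x3) + 4*(x1*y2-x2*y1)^2*(Real.sin θ^2+Real.cos θ^2+1)) *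
    Real.sin_sq_add_cos_sq θ

lemma ediam1_rot (θ : ℝ) (E : Set H1) : ediam1 (rot θ '' E) = ediam1 E := by
  unfold ediam1
  rw [iSup_image]
  refine iSup_congr fun a => iSup_congr fun _ => ?_
  rw [iSup_image]
  refine iSup_congr fun b => iSup_congr fun _ => ?_
  rw [rot_dH]

lemma rot_image_ball (θ : ℝ) (x : H1) (r : ℝ) :
    rot θ '' ball1 x r = ball1 (rot θ x) r := by
  ext p
  constructor
  · rintro ⟨q, hq, rfl⟩
    simpa only [ball1, mem_setOf_eq, rot_dH] using hq
  · intro hp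
    refine ⟨rot (-θ) p, ?_, by rw [rot_rot, add_neg_cancel, rot_zero]⟩
    have : dH1 (rot θ x) (rot θ (rot (-θ) p)) ≤ r := by
      rwa [rot_rot, add_neg_cancel, rot_zero]
    rwa [rot_dH] at this

/-- The unit circle in the plane `x₃ = 0`. -/
lemma rot_image_circle (θ : ℝ) :
    rot θ '' {p : H1 | ∃ φ : ℝ, p = (Real.cos φ, Real.sin φ, 0)} =
      {p : H1 | ∃ φ : ℝ, p = (Real.cos φ, Real.sin φ, 0)} := by
  ext p
  constructor
  · rintro ⟨q, ⟨φ, rfl⟩, rfl⟩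
    refine ⟨θ + φ, ?_⟩
    simp [rot, Real.cos_add, Real.sin_add]
  · rintro ⟨φ, rfl⟩
    refine ⟨(Real.cos (φ - θ), Real.sin (φ - θ), 0), ⟨φ - θ, rfl⟩, ?_⟩
    simp only [rot, Real.cos_sub, Real.sin_sub]
    refine Prod.ext ?_ (Prod.ext ?_ rfl)
    · linear_combination Real.cos φ * Real.sin_sq_add_cos_sq θ
    · linear_combination Real.sin φ * Real.sin_sq_add_cos_sq θ

lemma haus1_rot_le (θ s : ℝ) (E : Set H1) : haus1 s (rot θ '' E) ≤ haus1 s E := by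
  unfold haus1
  refine iSup₂_le fun δ hδ => le_iSup₂_of_le δ hδ ?_
  refine le_iInf fun t => le_iInf fun ht => le_iInf fun hd => ?_
  refine iInf_le_of_le (fun i => rot θ '' t i) (iInf_le_of_le ?_ (iInf_le_of_le ?_ ?_))
  · rw [← Set.image_iUnion]
    exact Set.image_mono ht
  · intro i
    rw [ediam1_rot]
    exact hd i
  · refine le_of_eq (tsum_congr fun i => ?_)
    rw [ediam1_rot]

lemma haus1_rot (θ s : ℝ) (E : Set H1) : haus1 s (rot θ '' E) = haus1 s E := by
  refine le_antisymm (haus1_rot_le θ s E) ?_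
  have h := haus1_rot_le (-θ) s (rot θ '' E)
  rwa [rot_image_image] at h

/-- The restriction of the 2-dimensional Korányi Hausdorff measure to the unit circle
`S¹ × {0} ⊆ ℍ¹` is uniformly distributed on `(ℍ¹, d_H)`. -/
theorem statement18 :
    ∀ x ∈ {p : H1 | ∃ θ : ℝ, p = (Real.cos θ, Real.sin θ, 0)},
      ∀ y ∈ {p : H1 | ∃ θ : ℝ, p = (Real.cos θ, Real.sin θ, 0)},
        ∀ r : ℝ, 0 < r →
          haus1 2 (ball1 x r ∩ {p : H1 | ∃ θ : ℝ, p = (Real.cos θ, Real.sin θ, 0)}) =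
          haus1 2 (ball1 y r ∩ {p : H1 | ∃ θ : ℝ, p = (Real.cos θ, Real.sin θ, 0)}) := by
  rintro x ⟨α, rfl⟩ y ⟨β, rfl⟩ r _
  have hy : rot (β - α) ((Real.cos α, Real.sin α, 0) : H1) = (Real.cos β, Real.sin β, 0) := by
    simp only [rot, Real.cos_sub, Real.sin_sub]
    refine Prod.ext ?_ (Prod.ext ?_ rfl)
    · linear_combination Real.cos β * Real.sin_sq_add_cos_sq α
    · linear_combination Real.sin β * Real.sin_sq_add_cos_sq α
  calc haus1 2 (ball1 (Real.cos α, Real.sin α, 0) r ∩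
        {p : H1 | ∃ θ : ℝ, p = (Real.cos θ, Real.sin θ, 0)})
      = haus1 2 (rot (β - α) '' (ball1 (Real.cos α, Real.sin α, 0) r ∩
        {p : H1 | ∃ θ : ℝ, p = (Real.cos θ, Real.sin θ, 0)})) := (haus1_rot _ _ _).symm
    _ = haus1 2 (ball1 (Real.cos β, Real.sin β, 0) r ∩
        {p : H1 | ∃ θ : ℝ, p = (Real.cos θ, Real.sin θ, 0)}) := by
        rw [Set.image_inter (rot_injective (β - α)), rot_image_ball, hy, rot_image_circle]
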